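/- arXiv:2507.10995 — 5 statements merged into one kernel-verified Lean document; each statement's English description precedes it below -/
import Mathlib

section
/- Suppose V : S → ℝ satisfies the Poisson equation V = r − r_*·e + P V with P row-stochastic, and suppose r is not constant. Then V is not equivalent to −r; that is, there exist no m > 0 and d ∈ ℝ with V = −m·r + d·e. -/
/-!
Substituting `V = -m r + d` into the Poisson equation gives `(1 + m) r = r_* + m P r`. Since `P`
averages, `P r ≤ max r` and `P r ≥ min r`; evaluating at a maximiser and at a minimiser of `r`
yields `max r ≤ r_* ≤ min r`, so `r` is the constant `r_*`.
-/

open Matrix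

namespace Matrix

variable {R S : Type*} [Fintype S]

section OrderedSemiring

variable [Semiring R] [PartialOrder R] [IsOrderedRing R] {P : Matrix S S R}

theorem mulVec_le_of_forall_le (hPnn : ∀ s s', 0 ≤ P s s') (hProw : ∀ s, ∑ s', P s s' = 1)
    {r : S → R} {c : R} (hr : ∀ s, r s ≤ c) (s : S) : (P *ᵥ r) s ≤ c :=
  calc (P *ᵥ r) s = ∑ s', P s s' * r s' := rfl
    _ ≤ ∑ s', P s s' * c :=
      Finset.sum_le_sum fun s' _ => mul_le_mul_of_nonneg_left (hr s') (hPnn s s')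
    _ = c := by rw [← Finset.sum_mul, hProw s, one_mul]

theorem le_mulVec_of_forall_le (hPnn : ∀ s s', 0 ≤ P s s') (hProw : ∀ s, ∑ s', P s s' = 1)
    {r : S → R} {c : R} (hr : ∀ s, c ≤ r s) (s : S) : c ≤ (P *ᵥ r) s :=
  calc c = ∑ s', P s s' * c := by rw [← Finset.sum_mul, hProw s, one_mul]
    _ ≤ ∑ s', P s s' * r s' :=
      Finset.sum_le_sum fun s' _ => mul_le_mul_of_nonneg_left (hr s') (hPnn s s')
    _ = (P *ᵥ r) s := rfl

end OrderedSemiring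

theorem mulVec_mul_add_const [CommSemiring R] {P : Matrix S S R} (hProw : ∀ s, ∑ s', P s s' = 1)
    (a d : R) (r : S → R) : (P *ᵥ fun s => a * r s + d) = fun s => a * (P *ᵥ r) s + d := by
  ext s
  simp only [mulVec, dotProduct, mul_add, Finset.sum_add_distrib, ← Finset.sum_mul, hProw s,
    one_mul, Finset.mul_sum]
  simp only [mul_left_comm]

theorem eq_const_of_one_add_mul_eq_add_mul_mulVec
    [Field R] [LinearOrder R] [IsStrictOrderedRing R]
    {P : Matrix S S R} (hPnn : ∀ s s', 0 ≤ P s s') (hProw : ∀ s, ∑ s', P s s' = 1)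
    {r : S → R} {c m : R} (hm : 0 ≤ m) (h : ∀ s, (1 + m) * r s = c + m * (P *ᵥ r) s)
    (s : S) : r s = c := by
  have hS : (Finset.univ : Finset S).Nonempty := ⟨s, Finset.mem_univ s⟩
  obtain ⟨smax, -, hmax⟩ := Finset.exists_max_image Finset.univ r hS
  obtain ⟨smin, -, hmin⟩ := Finset.exists_min_image Finset.univ r hS
  have hPmax : m * (P *ᵥ r) smax ≤ m * r smax := mul_le_mul_of_nonneg_left
    (mulVec_le_of_forall_le hPnn hProw (fun s' => hmax s' (Finset.mem_univ s')) smax) hm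
  have hPmin : m * r smin ≤ m * (P *ᵥ r) smin := mul_le_mul_of_nonneg_left
    (le_mulVec_of_forall_le hPnn hProw (fun s' => hmin s' (Finset.mem_univ s')) smin) hm
  linarith [h smax, h smin, hmax s (Finset.mem_univ s), hmin s (Finset.mem_univ s)]

end Matrix

/-- If `V` satisfies the Poisson equation `V = r - r_* e + P V` with `P` row-stochastic and
`r` is not constant, then `V` is not equivalent to `-r`: there are no `m > 0` and `d ∈ ℝ`
with `V = -m r + d e`. -/
theorem value_not_equivalent_to_neg_reward
    {S : Type*} [Fintype S]
    (P : Matrix S S ℝ) (hPnn : ∀ s s', 0 ≤ P s s') (hProw : ∀ s, ∑ s', P s s' = 1)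
    (r V : S → ℝ) (rstar : ℝ)
    (hpoisson : ∀ s, V s = r s - rstar + (P.mulVec V) s)
    (hrnc : ¬ ∃ a : ℝ, ∀ s, r s = a) :
    ¬ ∃ m > (0 : ℝ), ∃ d : ℝ, ∀ s, V s = -m * r s + d := by
  rintro ⟨m, hm, d, hV⟩
  have hPV : ∀ s, (P *ᵥ V) s = -m * (P *ᵥ r) s + d := by
    rw [funext hV, mulVec_mul_add_const hProw]
    exact fun s => rfl
  have hres : ∀ s, (1 + m) * r s = rstar + m * (P *ᵥ r) s := fun s => by
    linarith [hpoisson s, hV s, hPV s]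
  exact hrnc ⟨rstar, eq_const_of_one_add_mul_eq_add_mul_mulVec hPnn hProw hm.le hres⟩
end

section
/- Let f, g1, g2 : S → ℝ (S finite) and suppose c·f + k = (1−β)·g1 + β·g2 for some c > 0, k ∈ ℝ, β ∈ [0,1]. If neither g1 nor g2 is constant, g1 is not equivalent to g2, and g1 is not equivalent to −g2, then β is unique: whenever c'·f + k' = (1−β')·g1 + β'·g2 with c' > 0, k' ∈ ℝ, β' ∈ [0,1], we have β' = β. -/
/-! Subtracting `c` times the second representation from `c'` times the first gives a
constant combination `A • g1 + B • g2` with `A = c' (1 - β) - c (1 - β')` and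
`B = c' β - c β'`. The hypotheses on `g1`, `g2` say exactly that `g1`, `g2` and the constants
are linearly independent, so `A = B = 0`; then `A + B = c' - c` forces `c' = c`, and
`B = 0` becomes `c (β - β') = 0`. -/

section AffineIndependence

variable {S : Type*} {g1 g2 : S → ℝ}

theorem not_exists_affine_eq
    (hg1 : ¬ ∃ a : ℝ, ∀ s, g1 s = a)
    (hne : ¬ ∃ c > (0 : ℝ), ∃ k : ℝ, ∀ s, g1 s = c * g2 s + k)
    (hne' : ¬ ∃ c > (0 : ℝ), ∃ k : ℝ, ∀ s, g1 s = c * (-g2 s) + k) :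
    ¬ ∃ m k : ℝ, ∀ s, g1 s = m * g2 s + k := by
  rintro ⟨m, k, hmk⟩
  rcases lt_trichotomy m 0 with hm | rfl | hm
  · exact hne' ⟨-m, neg_pos.mpr hm, k, fun s => by rw [hmk s]; ring⟩
  · exact hg1 ⟨k, fun s => by rw [hmk s]; ring⟩
  · exact hne ⟨m, hm, k, hmk⟩

theorem coeffs_eq_zero_of_linear_combination_eq_const
    (hg1 : ¬ ∃ a : ℝ, ∀ s, g1 s = a)
    (hg2 : ¬ ∃ a : ℝ, ∀ s, g2 s = a)
    (hne : ¬ ∃ c > (0 : ℝ), ∃ k : ℝ, ∀ s, g1 s = c * g2 s + k)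
    (hne' : ¬ ∃ c > (0 : ℝ), ∃ k : ℝ, ∀ s, g1 s = c * (-g2 s) + k)
    {A B K : ℝ} (hK : ∀ s, A * g1 s + B * g2 s = K) :
    A = 0 ∧ B = 0 := by
  by_cases hA : A = 0
  · subst hA
    refine ⟨rfl, by_contra fun hB => hg2 ⟨K / B, fun s => ?_⟩⟩
    rw [eq_div_iff hB]
    linear_combination hK s
  · refine absurd ⟨-B / A, K / A, fun s => ?_⟩ (not_exists_affine_eq hg1 hne hne')
    field_simp
    linear_combination hK s

end AffineIndependence

theorem conflation_degree_unique_general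
    {S : Type*}
    (f g1 g2 : S → ℝ)
    (hg1 : ¬ ∃ a : ℝ, ∀ s, g1 s = a)
    (hg2 : ¬ ∃ a : ℝ, ∀ s, g2 s = a)
    (hne : ¬ ∃ c > (0 : ℝ), ∃ k : ℝ, ∀ s, g1 s = c * g2 s + k)
    (hne' : ¬ ∃ c > (0 : ℝ), ∃ k : ℝ, ∀ s, g1 s = c * (-g2 s) + k)
    (c k β : ℝ) (hc : 0 < c)
    (h : ∀ s, c * f s + k = (1 - β) * g1 s + β * g2 s)
    (c' k' β' : ℝ)
    (h' : ∀ s, c' * f s + k' = (1 - β') * g1 s + β' * g2 s) :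
    β' = β := by
  obtain ⟨hA, hB⟩ := coeffs_eq_zero_of_linear_combination_eq_const hg1 hg2 hne hne'
    (A := c' * (1 - β) - c * (1 - β')) (B := c' * β - c * β') (K := c' * k - c * k')
    fun s => by linear_combination c * h' s - c' * h s
  have hcc : c' = c := by linarith
  subst hcc
  exact (mul_left_cancel₀ hc.ne' (by linarith : c' * β' = c' * β))

/-- Uniqueness of the degree of conflation `β`: if neither `g1` nor `g2` is constant,
`g1` is not equivalent to `g2`, and `g1` is not equivalent to `-g2`, then the `β` in a
representation `c f + k = (1-β) g1 + β g2` (with `c > 0`, `β ∈ [0,1]`) is unique. -/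
theorem conflation_degree_unique
    {S : Type*} [Fintype S]
    (f g1 g2 : S → ℝ)
    (hg1 : ¬ ∃ a : ℝ, ∀ s, g1 s = a)
    (hg2 : ¬ ∃ a : ℝ, ∀ s, g2 s = a)
    (hne : ¬ ∃ c > (0 : ℝ), ∃ k : ℝ, ∀ s, g1 s = c * g2 s + k)
    (hne' : ¬ ∃ c > (0 : ℝ), ∃ k : ℝ, ∀ s, g1 s = c * (-g2 s) + k)
    (c k β : ℝ) (hc : 0 < c) (hβ : β ∈ Set.Icc (0 : ℝ) 1)
    (h : ∀ s, c * f s + k = (1 - β) * g1 s + β * g2 s)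
    (c' k' β' : ℝ) (hc' : 0 < c') (hβ' : β' ∈ Set.Icc (0 : ℝ) 1)
    (h' : ∀ s, c' * f s + k' = (1 - β') * g1 s + β' * g2 s) :
    β' = β :=
  conflation_degree_unique_general f g1 g2 hg1 hg2 hne hne' c k β hc h c' k' β' h'
end

section
/- In the three-state canonical MDP, the optimal average reward equals ε(M−1)/(1+2ε), attained by the policy that selects 'move' in states 1 and 2; its stationary distribution assigns probabilities (1/(1+2ε), ε/(1+2ε), ε/(1+2ε)) to states 1, 2, 3. -/
/-- Transition probabilities of the canonical three-state MDP. States are `0, 1, 2`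
(common state, instrumental goal, terminal goal); `true` is `move`, `false` is `stay`. -/
noncomputable def canonP (ε : ℝ) : Fin 3 → Bool → Fin 3 → ℝ := fun s a s' =>
  if s = 0 then (if s' = 1 then ε else if s' = 0 then 1 - ε else 0)
  else if s = 1 then
    (if a then (if s' = 2 then 1 else 0) else (if s' = 1 then 1 else 0))
  else (if s' = 0 then 1 else 0)

/-- Rewards of the canonical MDP: `r(1) = 0`, `r(2) = -1`, `r(3) = M`. -/
noncomputable def canonR (M : ℝ) : Fin 3 → ℝ := ![0, -1, M]

/-- A (randomized) policy: a probability distribution over actions at each state. -/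
def IsPolicy (π : Fin 3 → Bool → ℝ) : Prop :=
  (∀ s a, 0 ≤ π s a) ∧ ∀ s, ∑ a : Bool, π s a = 1

/-- `φ` is a stationary distribution of the Markov chain induced by policy `π`. -/
def IsStationaryCanon (ε : ℝ) (π : Fin 3 → Bool → ℝ) (φ : Fin 3 → ℝ) : Prop :=
  (∀ s, 0 ≤ φ s) ∧ (∑ s, φ s = 1) ∧
    ∀ s', ∑ s, φ s * (∑ a : Bool, π s a * canonP ε s a s') = φ s'

/-!
Under any policy, balance at the common state gives `φ 2 = ε φ 0`, and balance at the terminal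
goal gives `φ 2 = π(move | 1) φ 1 ≤ φ 1`. Hence the average reward `M φ 2 - φ 1` is at most
`(M - 1) φ 2`, while `1 = φ 0 + φ 1 + φ 2 ≥ (1/ε + 2) φ 2` caps `φ 2` at `ε / (1 + 2ε)`.
Always moving makes both inequalities equalities.
-/

theorem sum_mul_canonR (M : ℝ) (φ : Fin 3 → ℝ) :
    ∑ s, φ s * canonR M s = M * φ 2 - φ 1 := by
  simp only [canonR, Fin.sum_univ_three, Matrix.cons_val]
  ring

theorem isStationaryCanon_move {ε : ℝ} (hε : 0 ≤ ε) :
    IsStationaryCanon ε (fun _ a => if a then 1 else 0)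
      ![1 / (1 + 2 * ε), ε / (1 + 2 * ε), ε / (1 + 2 * ε)] := by
  have hden : 1 + 2 * ε ≠ 0 := by positivity
  refine ⟨fun s => ?_, ?_, fun s' => ?_⟩
  · fin_cases s <;> dsimp <;> positivity
  · simp only [Fin.sum_univ_three, Matrix.cons_val]
    field_simp
    ring
  · fin_cases s' <;>
      simp only [canonP, Fin.sum_univ_three, Fintype.sum_bool, Fin.zero_eta, Fin.mk_one,
        Fin.reduceFinMk, Fin.isValue, Fin.reduceEq, ↓reduceIte, Bool.false_eq_true, Matrix.cons_val] <;>
      field_simp <;> ring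

namespace IsStationaryCanon

variable {ε : ℝ} {π : Fin 3 → Bool → ℝ} {φ : Fin 3 → ℝ}

theorem terminal_eq (hπ : ∀ s, ∑ a, π s a = 1) (hφ : IsStationaryCanon ε π φ) : φ 2 = ε * φ 0 := by
  have hbal := hφ.2.2 0
  have h0 := hπ 0
  have h2 := hπ 2
  simp only [canonP, Fin.sum_univ_three, Fintype.sum_bool, Fin.isValue, Fin.reduceEq,
    ↓reduceIte, ite_self] at hbal h0 h2
  linear_combination hbal - φ 0 * (1 - ε) * h0 - φ 2 * h2

theorem terminal_le_instrumental (hπ : IsPolicy π) (hφ : IsStationaryCanon ε π φ) :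
    φ 2 ≤ φ 1 := by
  have hbal := hφ.2.2 2
  have h1 := hπ.2 1
  simp only [canonP, Fin.sum_univ_three, Fintype.sum_bool, Fin.isValue, Fin.reduceEq,
    ↓reduceIte, Bool.false_eq_true] at hbal h1
  linear_combination -hbal + φ 1 * h1 + mul_nonneg (hφ.1 1) (hπ.1 1 false)

theorem terminal_mul_le (hε : 0 ≤ ε) (hπ : IsPolicy π) (hφ : IsStationaryCanon ε π φ) :
    φ 2 * (1 + 2 * ε) ≤ ε := by
  have hsum : φ 0 + φ 1 + φ 2 = 1 := (Fin.sum_univ_three φ).symm.trans hφ.2.1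
  linear_combination ε * hsum + hφ.terminal_eq hπ.2 +
    mul_le_mul_of_nonneg_left (hφ.terminal_le_instrumental hπ) hε

theorem sum_mul_canonR_le {M : ℝ} (hε : 0 ≤ ε) (hM : 1 ≤ M) (hπ : IsPolicy π)
    (hφ : IsStationaryCanon ε π φ) :
    ∑ s, φ s * canonR M s ≤ ε * (M - 1) / (1 + 2 * ε) := by
  rw [sum_mul_canonR, le_div_iff₀ (by positivity)]
  calc (M * φ 2 - φ 1) * (1 + 2 * ε) ≤ (M * φ 2 - φ 2) * (1 + 2 * ε) := by
        gcongr
        exact hφ.terminal_le_instrumental hπ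
    _ = (M - 1) * (φ 2 * (1 + 2 * ε)) := by ring
    _ ≤ (M - 1) * ε := mul_le_mul_of_nonneg_left (hφ.terminal_mul_le hε hπ) (by linarith)
    _ = ε * (M - 1) := by ring

end IsStationaryCanon

/-- The optimal average reward of the canonical MDP is `ε (M - 1) / (1 + 2ε)`, attained by
the always-`move` policy, whose stationary distribution is
`(1/(1+2ε), ε/(1+2ε), ε/(1+2ε))`. -/
theorem canonical_optimal_average_reward
    (ε M : ℝ) (hε : ε ∈ Set.Ioo (0 : ℝ) 1) (hM : 1 ≤ M) :
    IsStationaryCanon ε (fun _ a => if a then 1 else 0)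
      ![1 / (1 + 2 * ε), ε / (1 + 2 * ε), ε / (1 + 2 * ε)] ∧
    (∑ s, ![1 / (1 + 2 * ε), ε / (1 + 2 * ε), ε / (1 + 2 * ε)] s * canonR M s
        = ε * (M - 1) / (1 + 2 * ε)) ∧
    ∀ π φ, IsPolicy π → IsStationaryCanon ε π φ →
      ∑ s, φ s * canonR M s ≤ ε * (M - 1) / (1 + 2 * ε) := by
  have hε0 : 0 ≤ ε := hε.1.le
  refine ⟨isStationaryCanon_move hε0, ?_, fun π φ hπ hφ => hφ.sum_mul_canonR_le hε0 hM hπ⟩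
  have hden : 1 + 2 * ε ≠ 0 := by positivity
  rw [sum_mul_canonR]
  simp only [Matrix.cons_val]
  field_simp
end

section
/- In the canonical MDP, if r̂ : {1,2,3} → ℝ satisfies r̂(2) > r̂(1) and r̂(2) > (r̂(1) + ε·r̂(3))/(1+ε), then any policy maximizing average r̂-reward stays forever in state 2 once reached, and its average reward under the true reward r is −1. -/
/-!
Any stationary distribution `φ` satisfies `φ 2 = ε φ 0` and `φ 1 = 1 - (1 + ε) φ 0`, so its
average `r̂`-reward is `r̂ 1 + φ 0 (r̂ 0 + ε r̂ 2 - (1 + ε) r̂ 1)`. The hypothesis makes the bracket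
negative, and staying at state `1` forever is feasible with reward `r̂ 1`, so a maximizer has
`φ 0 = 0`, hence `φ 2 = 0` and `φ 1 = 1`.
-/

def stayPolicy : Fin 3 → Bool → ℝ := fun _ a => if a then 0 else 1

theorem isPolicy_stayPolicy : IsPolicy stayPolicy :=
  ⟨fun _ a => by cases a <;> simp [stayPolicy], fun _ => by simp [stayPolicy]⟩

theorem isStationaryCanon_stayPolicy (ε : ℝ) : IsStationaryCanon ε stayPolicy ![0, 1, 0] :=
  ⟨fun s => by fin_cases s <;> simp, by simp [Fin.sum_univ_three], fun s' => by
    fin_cases s' <;> simp [Fin.sum_univ_three, canonP, stayPolicy]⟩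

section Stationary

variable {ε : ℝ} {π : Fin 3 → Bool → ℝ} {φ : Fin 3 → ℝ}

/-- Balance at state `0`: all its inflow comes from state `2`, and it is left at rate `ε`. -/
theorem IsStationaryCanon.apply_two (hπ : IsPolicy π) (hφ : IsStationaryCanon ε π φ) :
    φ 2 = ε * φ 0 := by
  have hπ0 := hπ.2 0
  have hπ2 := hπ.2 2
  have h0 := hφ.2.2 0
  simp only [Fintype.sum_bool] at hπ0 hπ2
  simp [Fin.sum_univ_three, canonP] at h0
  linear_combination h0 - (1 - ε) * φ 0 * hπ0 - φ 2 * hπ2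

theorem IsStationaryCanon.apply_one (hπ : IsPolicy π) (hφ : IsStationaryCanon ε π φ) :
    φ 1 = 1 - (1 + ε) * φ 0 := by
  have hsum := hφ.2.1
  rw [Fin.sum_univ_three] at hsum
  linear_combination hsum - hφ.apply_two hπ

theorem IsStationaryCanon.sum_mul_eq (hπ : IsPolicy π) (hφ : IsStationaryCanon ε π φ)
    (f : Fin 3 → ℝ) : ∑ s, φ s * f s = f 1 + φ 0 * (f 0 + ε * f 2 - (1 + ε) * f 1) := by
  rw [Fin.sum_univ_three, hφ.apply_one hπ, hφ.apply_two hπ]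
  ring

theorem IsStationaryCanon.apply_zero_eq_zero_of_le (hπ : IsPolicy π)
    (hφ : IsStationaryCanon ε π φ) {f : Fin 3 → ℝ} (hf : f 0 + ε * f 2 < (1 + ε) * f 1)
    (hle : f 1 ≤ ∑ s, φ s * f s) : φ 0 = 0 := by
  rw [hφ.sum_mul_eq hπ] at hle
  have : φ 0 * (f 0 + ε * f 2 - (1 + ε) * f 1) ≥ 0 := by linarith
  exact le_antisymm (nonpos_of_mul_nonneg_left this (by linarith)) (hφ.1 0)

end Stationary

theorem severe_misalignment_conditions_general
    (ε M : ℝ) (hε : ε ∈ Set.Ioo (0 : ℝ) 1)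
    (rhat : Fin 3 → ℝ)
    (h2 : rhat 1 > (rhat 0 + ε * rhat 2) / (1 + ε))
    (φhat : Fin 3 → ℝ)
    (hfeas : ∃ π, IsPolicy π ∧ IsStationaryCanon ε π φhat)
    (hmax : ∀ π φ, IsPolicy π → IsStationaryCanon ε π φ →
      ∑ s, φ s * rhat s ≤ ∑ s, φhat s * rhat s) :
    φhat 1 = 1 ∧ ∑ s, φhat s * canonR M s = -1 := by
  obtain ⟨π, hπ, hφ⟩ := hfeas
  have hrhat : rhat 0 + ε * rhat 2 < (1 + ε) * rhat 1 := by
    rwa [gt_iff_lt, div_lt_iff₀' (by linarith [hε.1])] at h2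
  have hstay : rhat 1 ≤ ∑ s, φhat s * rhat s :=
    calc rhat 1 = ∑ s, ![0, 1, 0] s * rhat s := by simp [Fin.sum_univ_three]
      _ ≤ _ := hmax _ _ isPolicy_stayPolicy (isStationaryCanon_stayPolicy ε)
  have h0 : φhat 0 = 0 := hφ.apply_zero_eq_zero_of_le hπ hrhat hstay
  have h1 : φhat 1 = 1 := by rw [hφ.apply_one hπ, h0]; ring
  refine ⟨h1, ?_⟩
  rw [hφ.sum_mul_eq hπ, h0]
  simp [canonR]

/-- Conditions for severe misalignment: if `r̂(2) > r̂(1)` and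
`r̂(2) > (r̂(1) + ε r̂(3))/(1+ε)`, then any stationary distribution maximizing average
`r̂`-reward over all policies concentrates on state 2 (the agent stays forever at the
instrumental goal), so its average true reward is `-1`. -/
theorem severe_misalignment_conditions
    (ε M : ℝ) (hε : ε ∈ Set.Ioo (0 : ℝ) 1)
    (rhat : Fin 3 → ℝ)
    (h1 : rhat 1 > rhat 0)
    (h2 : rhat 1 > (rhat 0 + ε * rhat 2) / (1 + ε))
    (φhat : Fin 3 → ℝ)
    (hfeas : ∃ π, IsPolicy π ∧ IsStationaryCanon ε π φhat)
    (hmax : ∀ π φ, IsPolicy π → IsStationaryCanon ε π φ →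
      ∑ s, φ s * rhat s ≤ ∑ s, φhat s * rhat s) :
    φhat 1 = 1 ∧ ∑ s, φhat s * canonR M s = -1 :=
  severe_misalignment_conditions_general ε M hε rhat h2 φhat hfeas hmax
end

section
/- In the canonical MDP with ε < β_*/3 and M > 9/β_*² (β_* ∈ (0,1]), suppose r̂ conflates r and V_* with degree β ∈ [β_*, 1], i.e., c·r̂ + k·e = (1−β)·r + β·V_* with c > 0. Then r̂(3) − r̂(1) + (1+ε)(r̂(2) − r̂(3)) > 0, equivalently r̂(2) > (r̂(1) + ε·r̂(3))/(1+ε). -/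
/-!
Both `r` and `V_*` are seen through the linear functional
`x ↦ x 2 - x 0 + (1 + ε) (x 1 - x 2)`, which kills constants, so `c` times its value at `r̂` is
`(1 - β)` times its value at `r` plus `β` times its value at `V_*`. After clearing the
denominator `1 + 2ε`, the coefficient of `M` is `β - ε (1 - β) - ε² (2 - β) > 4β/9`, while the
constant term stays above `-4`; since `M β² > 9`, the `M`-term wins.
-/

theorem conflation_sub {ι : Type*} {c k β : ℝ} {r rhat V : ι → ℝ}
    (hconf : ∀ s, c * rhat s + k = (1 - β) * r s + β * V s) (s t : ι) :
    c * (rhat s - rhat t) = (1 - β) * (r s - r t) + β * (V s - V t) := by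
  linear_combination hconf s - hconf t

theorem four_ninths_mul_lt_coeff {β ε : ℝ} (hε : 0 < ε) (hεβ : 3 * ε < β) (hβ : β ≤ 1) :
    4 / 9 * β < β - ε * (1 - β) - ε ^ 2 * (2 - β) := by
  have hlin : ε * (1 - β) < β / 3 := by nlinarith
  have hsq : ε ^ 2 * (2 - β) < 2 * β / 9 := by nlinarith
  linarith

theorem conflated_gap_pos {β ε M : ℝ} (hε : 0 < ε) (hεβ : 3 * ε < β) (hβ : β ≤ 1)
    (hM : 9 < M * β ^ 2) :
    0 < (1 - β) * (-(1 + ε) - ε * M)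
      + β * (M - (1 + ε) - (2 + ε) * (ε * (M - 1) / (1 + 2 * ε))) := by
  have hpos : 0 < 1 + 2 * ε := by linarith
  have hβ0 : 0 < β := by linarith
  have hcleared : (1 + 2 * ε) * ((1 - β) * (-(1 + ε) - ε * M)
        + β * (M - (1 + ε) - (2 + ε) * (ε * (M - 1) / (1 + 2 * ε))))
      = M * (β - ε * (1 - β) - ε ^ 2 * (2 - β)) - (1 + ε) * (1 + 2 * ε) + β * ε * (2 + ε) := by
    field_simp
    ring
  have hM0 : 0 < M := by nlinarith
  have hMβ : 9 ≤ M * β := by nlinarith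
  have hcoeff : 4 < M * (β - ε * (1 - β) - ε ^ 2 * (2 - β)) := by
    nlinarith [four_ninths_mul_lt_coeff hε hεβ hβ]
  have hconst : (1 + ε) * (1 + 2 * ε) < 4 := by nlinarith
  have hcross : 0 < β * ε * (2 + ε) := by positivity
  exact pos_of_mul_pos_right (by linarith) hpos.le

theorem slight_conflation_severe_misalignment_general
    (ε M βstar β c k : ℝ)
    (hε : ε ∈ Set.Ioo (0 : ℝ) 1)
    (hεβ : ε < βstar / 3)
    (hM : M > 9 / βstar ^ 2)
    (hβ : β ∈ Set.Icc βstar 1)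
    (hc : 0 < c)
    (r rhat V : Fin 3 → ℝ)
    (hr : r = ![0, -1, M])
    (hV31 : V 2 - V 0 = M - ε * (M - 1) / (1 + 2 * ε))
    (hV23 : V 1 - V 2 = -1 - ε * (M - 1) / (1 + 2 * ε))
    (hconf : ∀ s, c * rhat s + k = (1 - β) * r s + β * V s) :
    rhat 2 - rhat 0 + (1 + ε) * (rhat 1 - rhat 2) > 0 ∧
    rhat 1 > (rhat 0 + ε * rhat 2) / (1 + ε) := by
  obtain ⟨hε0, -⟩ := hε
  obtain ⟨hβstar, hβ1⟩ := hβ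
  have hβstar0 : 0 < βstar := by linarith
  have hMβ : 9 < M * β ^ 2 := by
    have hMstar := (div_lt_iff₀ (by positivity)).mp hM
    have hM0 : 0 < M := lt_of_le_of_lt (by positivity) hM
    nlinarith [pow_le_pow_left₀ hβstar0.le hβstar 2]
  have hgap := conflated_gap_pos hε0 (by linarith) hβ1 hMβ
  have hcomb : c * (rhat 2 - rhat 0 + (1 + ε) * (rhat 1 - rhat 2))
      = (1 - β) * (-(1 + ε) - ε * M)
        + β * (M - (1 + ε) - (2 + ε) * (ε * (M - 1) / (1 + 2 * ε))) := by
    have h20 := conflation_sub hconf 2 0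
    have h12 := conflation_sub hconf 1 2
    simp only [hr, Matrix.cons_val] at h20 h12
    linear_combination h20 + (1 + ε) * h12 + β * hV31 + β * (1 + ε) * hV23
  have hmain : 0 < rhat 2 - rhat 0 + (1 + ε) * (rhat 1 - rhat 2) :=
    pos_of_mul_pos_right (hcomb ▸ hgap) hc.le
  refine ⟨hmain, ?_⟩
  rw [gt_iff_lt, div_lt_iff₀ (by linarith)]
  linarith

/-- Slight conflation induces severe misalignment in the canonical MDP: with
`ε < β_*/3` and `M > 9/β_*²`, any `r̂` conflating `r = (0, -1, M)` and `V_*` with degree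
`β ∈ [β_*, 1]` satisfies `r̂(3) - r̂(1) + (1+ε)(r̂(2) - r̂(3)) > 0`, equivalently
`r̂(2) > (r̂(1) + ε r̂(3))/(1+ε)`. States are indexed `0, 1, 2`. -/
theorem slight_conflation_severe_misalignment
    (ε M βstar β c k : ℝ)
    (hε : ε ∈ Set.Ioo (0 : ℝ) 1)
    (hβstar : βstar ∈ Set.Ioc (0 : ℝ) 1)
    (hεβ : ε < βstar / 3)
    (hM : M > 9 / βstar ^ 2)
    (hβ : β ∈ Set.Icc βstar 1)
    (hc : 0 < c)
    (r rhat V : Fin 3 → ℝ)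
    (hr : r = ![0, -1, M])
    (hV31 : V 2 - V 0 = M - ε * (M - 1) / (1 + 2 * ε))
    (hV23 : V 1 - V 2 = -1 - ε * (M - 1) / (1 + 2 * ε))
    (hconf : ∀ s, c * rhat s + k = (1 - β) * r s + β * V s) :
    rhat 2 - rhat 0 + (1 + ε) * (rhat 1 - rhat 2) > 0 ∧
    rhat 1 > (rhat 0 + ε * rhat 2) / (1 + ε) :=
  slight_conflation_severe_misalignment_general ε M βstar β c k hε hεβ hM hβ hc r rhat V hr hV31
    hV23 hconf
end
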